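/- Let φ be an H-equivariant cocharacter on a coalgebra C with coflat H-coaction δ. Then the map ψ(c) = S(φ(c^{(0)})) c^{(1)} satisfies ψ ⋆ φ = η ∘ ε (the convolution unit), i.e. ψ is a left convolution inverse of φ. -/
import Mathlib


open TensorProduct LinearMap Coalgebra

/-- A coflat Hopf coaction of a Hopf algebra `H` on a coalgebra `C`. -/
structure IsCoflatCoaction (R C H : Type) [CommRing R]
    [AddCommGroup C] [Module R C] [Coalgebra R C]
    [Ring H] [HopfAlgebra R H]
    (δ : C →ₗ[R] C ⊗[R] H) : Prop where
  coassoc : (TensorProduct.assoc R C H H).toLinearMap ∘ₗ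
      (TensorProduct.map δ (LinearMap.id : H →ₗ[R] H)) ∘ₗ δ
      = (TensorProduct.map (LinearMap.id : C →ₗ[R] C) (Coalgebra.comul (R := R))) ∘ₗ δ
  counitary : (TensorProduct.rid R C).toLinearMap ∘ₗ
      (TensorProduct.map (LinearMap.id : C →ₗ[R] C) (Coalgebra.counit (R := R))) ∘ₗ δ
      = LinearMap.id
  coflat_mul : (TensorProduct.map (LinearMap.id : (C ⊗[R] C) →ₗ[R] C ⊗[R] C)
        (LinearMap.mul' R H)) ∘ₗ
      (TensorProduct.tensorTensorTensorComm R C H C H).toLinearMap ∘ₗ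
      (TensorProduct.map δ δ) ∘ₗ Coalgebra.comul
      = (TensorProduct.map (Coalgebra.comul (R := R)) (LinearMap.id : H →ₗ[R] H)) ∘ₗ δ
  coflat_counit : (LinearMap.mul' R R) ∘ₗ
      (TensorProduct.map (Coalgebra.counit (R := R)) (Coalgebra.counit (R := R))) ∘ₗ δ
      = Coalgebra.counit

section Cocharacters

variable (R C H : Type) [CommRing R] [AddCommGroup C] [Module R C] [Coalgebra R C]
  [Ring H] [HopfAlgebra R H]

/-- The convolution product on `Hom(C,H)`: `(φ ⋆ ψ)(c) = φ(c₍₁₎) ψ(c₍₂₎)`. -/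
noncomputable def conv (φ ψ : C →ₗ[R] H) : C →ₗ[R] H :=
  (LinearMap.mul' R H) ∘ₗ (TensorProduct.map φ ψ) ∘ₗ Coalgebra.comul

/-- The convolution unit `c ↦ ε(c) 1`. -/
noncomputable def convOne : C →ₗ[R] H :=
  (Algebra.linearMap R H) ∘ₗ Coalgebra.counit

variable (δ : C →ₗ[R] C ⊗[R] H)

/-- `c ↦ φ(c₍₁₎⁽⁰⁾) ⊗ c₍₁₎⁽¹⁾ ψ(c₍₂₎)` as a linear map `C → H ⊗ H`. -/
noncomputable def coactTerm (φ ψ : C →ₗ[R] H) : C →ₗ[R] H ⊗[R] H :=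
  (TensorProduct.map (LinearMap.id : H →ₗ[R] H) (LinearMap.mul' R H)) ∘ₗ
    (TensorProduct.assoc R H H H).toLinearMap ∘ₗ
    (TensorProduct.map (TensorProduct.map φ (LinearMap.id : H →ₗ[R] H)) ψ) ∘ₗ
    (TensorProduct.map δ (LinearMap.id : C →ₗ[R] C)) ∘ₗ Coalgebra.comul

/-- `c ↦ c₍₁₎⁽⁰⁾ ⊗ c₍₁₎⁽¹⁾ φ(c₍₂₎)` as a linear map `C → C ⊗ H`. -/
noncomputable def comodCondLHS (φ : C →ₗ[R] H) : C →ₗ[R] C ⊗[R] H :=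
  (TensorProduct.map (LinearMap.id : C →ₗ[R] C) (LinearMap.mul' R H)) ∘ₗ
    (TensorProduct.assoc R C H H).toLinearMap ∘ₗ
    (TensorProduct.map δ φ) ∘ₗ Coalgebra.comul

/-- `c ↦ c₍₂₎⁽⁰⁾ ⊗ φ(c₍₁₎) c₍₂₎⁽¹⁾` as a linear map `C → C ⊗ H`. -/
noncomputable def comodCondRHS (φ : C →ₗ[R] H) : C →ₗ[R] C ⊗[R] H :=
  (TensorProduct.map (LinearMap.id : C →ₗ[R] C) (LinearMap.mul' R H)) ∘ₗ
    (TensorProduct.assoc R C H H).toLinearMap ∘ₗ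
    (TensorProduct.map ((TensorProduct.comm R H C).toLinearMap)
      (LinearMap.id : H →ₗ[R] H)) ∘ₗ
    (TensorProduct.assoc R H C H).symm.toLinearMap ∘ₗ
    (TensorProduct.map φ δ) ∘ₗ Coalgebra.comul

/-- An `H`-equivariant cocharacter: convolution invertible, counitary, satisfying the
coaction condition and the comodule condition. -/
structure IsCocharacter (φ : C →ₗ[R] H) : Prop where
  invertible : ∃ ψ : C →ₗ[R] H, conv R C H φ ψ = convOne R C H ∧ conv R C H ψ φ = convOne R C H
  counitary : (Coalgebra.counit (R := R)) ∘ₗ φ = Coalgebra.counit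
  coaction : (Coalgebra.comul (R := R)) ∘ₗ φ = coactTerm R C H δ φ φ
  comodule : comodCondLHS R C H δ φ = comodCondRHS R C H δ φ

end Cocharacters

/-- for an `H`-equivariant cocharacter `φ`, the map
`ψ(c) = S(φ(c⁽⁰⁾)) c⁽¹⁾` is a left convolution inverse of `φ`. -/
theorem cocharacter_left_inverse (R C H : Type) [CommRing R]
    [AddCommGroup C] [Module R C] [Coalgebra R C] [Ring H] [HopfAlgebra R H]
    (δ : C →ₗ[R] C ⊗[R] H) (hδ : IsCoflatCoaction R C H δ)
    (φ : C →ₗ[R] H) (hφ : IsCocharacter R C H δ φ) :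
    conv R C H
      ((LinearMap.mul' R H) ∘ₗ
        (TensorProduct.map ((HopfAlgebra.antipode (R := R)) ∘ₗ φ)
          (LinearMap.id : H →ₗ[R] H)) ∘ₗ δ)
      φ = convOne R C H := by
  classical
  set S : H →ₗ[R] H := (HopfAlgebra.antipode (R := R))
  have h1 : (LinearMap.mul' R H) ∘ₗ
      (TensorProduct.map ((LinearMap.mul' R H) ∘ₗ
        (TensorProduct.map (S ∘ₗ φ) (LinearMap.id : H →ₗ[R] H)) ∘ₗ δ) φ)
      = ((LinearMap.mul' R H) ∘ₗ (LinearMap.rTensor H S) ∘ₗ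
          (TensorProduct.map (LinearMap.id : H →ₗ[R] H) (LinearMap.mul' R H)) ∘ₗ
          (TensorProduct.assoc R H H H).toLinearMap ∘ₗ
          (TensorProduct.map (TensorProduct.map φ (LinearMap.id : H →ₗ[R] H)) φ)) ∘ₗ
        (TensorProduct.map δ (LinearMap.id : C →ₗ[R] C)) := by
    rw [show TensorProduct.map ((LinearMap.mul' R H) ∘ₗ
        (TensorProduct.map (S ∘ₗ φ) (LinearMap.id : H →ₗ[R] H)) ∘ₗ δ) φ
        = (TensorProduct.map ((LinearMap.mul' R H) ∘ₗ
            (TensorProduct.map (S ∘ₗ φ) (LinearMap.id : H →ₗ[R] H))) φ) ∘ₗ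
          (TensorProduct.map δ (LinearMap.id : C →ₗ[R] C)) by
      rw [← TensorProduct.map_comp]; simp [LinearMap.comp_assoc]]
    rw [← LinearMap.comp_assoc]
    congr 1
    apply TensorProduct.ext
    apply TensorProduct.ext
    ext c h d
    simp [LinearMap.mul'_apply, mul_assoc]
  have key : conv R C H
      ((LinearMap.mul' R H) ∘ₗ
        (TensorProduct.map (S ∘ₗ φ) (LinearMap.id : H →ₗ[R] H)) ∘ₗ δ) φ
      = (LinearMap.mul' R H) ∘ₗ (LinearMap.rTensor H S) ∘ₗ coactTerm R C H δ φ φ := by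
    unfold conv coactTerm
    rw [← LinearMap.comp_assoc _ _ (LinearMap.mul' R H), h1]
    simp only [LinearMap.comp_assoc]
  have h2 : (LinearMap.mul' R H) ∘ₗ (LinearMap.rTensor H S) ∘ₗ
      (Coalgebra.comul (R := R)) ∘ₗ φ
      = ((LinearMap.mul' R H) ∘ₗ (LinearMap.rTensor H S) ∘ₗ
          (Coalgebra.comul (R := R))) ∘ₗ φ := by
    simp only [LinearMap.comp_assoc]
  rw [key, ← hφ.coaction, h2, HopfAlgebra.mul_antipode_rTensor_comul,
    LinearMap.comp_assoc, hφ.counitary]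
  rfl
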